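/- Let D be a distribution that is β-close in Earth Mover Distance to an (α,r)-clusterable distribution D₀, whose clustering is realized by clusters C₁,…,C_s of its support. Let C = ⋃ C_i, and let C_{>α} be the set of all vectors in {0,1}^n at normalized Hamming distance greater than α from every vector of C. Then D(C_{>α}) ≤ β/α. -/

import Mathlib

/-- The normalized Hamming distance on the Boolean cube `{0,1}^n`. -/
noncomputable def nHam {n : ℕ} (x y : Fin n → Bool) : ℝ :=
  (hammingDist x y : ℝ) / n

/-- `D` is a probability distribution on a finite set: nonnegative with total mass 1. -/
def IsDist {Ω : Type*} [Fintype Ω] (D : Ω → ℝ) : Prop :=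
  (∀ x, 0 ≤ D x) ∧ ∑ x, D x = 1

/-- `f` is a valid transportation flow from `D₁` to `D₂`. -/
def IsFlow {n : ℕ} (D₁ D₂ : (Fin n → Bool) → ℝ)
    (f : (Fin n → Bool) → (Fin n → Bool) → ℝ) : Prop :=
  (∀ x y, 0 ≤ f x y) ∧ (∀ x, ∑ y, f x y = D₁ x) ∧ (∀ y, ∑ x, f x y = D₂ y)

/-- The Earth Mover Distance between two distributions on `{0,1}^n`, with respect to
the normalized Hamming distance: the infimum of the costs of valid flows. -/
noncomputable def emd {n : ℕ} (D₁ D₂ : (Fin n → Bool) → ℝ) : ℝ :=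
  sInf { c | ∃ f, IsFlow D₁ D₂ f ∧ ∑ x, ∑ y, f x y * nHam x y = c }

/-! A flow moves the mass of `D` at a point `x` into the support of `D₀`. If `x` is at
distance at least `α` from that support, each unit of this mass costs at least `α`, so
`α · D(F) ≤ cost` for every flow; taking the infimum gives `α · D(F) ≤ emd D D₀ ≤ β`. -/

variable {n : ℕ}

lemma nHam_nonneg (x y : Fin n → Bool) : 0 ≤ nHam x y := by
  unfold nHam
  positivity

lemma isFlow_mul {D₁ D₂ : (Fin n → Bool) → ℝ} (h₁ : IsDist D₁) (h₂ : IsDist D₂) :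
    IsFlow D₁ D₂ (fun x y => D₁ x * D₂ y) := by
  refine ⟨fun x y => mul_nonneg (h₁.1 x) (h₂.1 y), fun x => ?_, fun y => ?_⟩
  · rw [← Finset.mul_sum, h₂.2, mul_one]
  · rw [← Finset.sum_mul, h₁.2, one_mul]

namespace IsFlow

variable {D₁ D₂ : (Fin n → Bool) → ℝ} {f : (Fin n → Bool) → (Fin n → Bool) → ℝ}

lemma le_right (hf : IsFlow D₁ D₂ f) (x y : Fin n → Bool) : f x y ≤ D₂ y := by
  rw [← hf.2.2 y]
  exact Finset.single_le_sum (fun z _ => hf.1 z y) (Finset.mem_univ x)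

lemma mul_sum_le_cost (hf : IsFlow D₁ D₂ f) {α : ℝ} {F : Finset (Fin n → Bool)}
    (hfar : ∀ x ∈ F, ∀ y, D₂ y ≠ 0 → α ≤ nHam x y) :
    α * ∑ x ∈ F, D₁ x ≤ ∑ x, ∑ y, f x y * nHam x y := by
  have hterm : ∀ x ∈ F, ∀ y, α * f x y ≤ f x y * nHam x y := by
    intro x hx y
    rcases (hf.1 x y).eq_or_lt with hzero | hpos
    · simp [← hzero]
    · have hy : D₂ y ≠ 0 := (hpos.trans_le (hf.le_right x y)).ne'
      rw [mul_comm]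
      exact mul_le_mul_of_nonneg_left (hfar x hx y hy) hpos.le
  calc α * ∑ x ∈ F, D₁ x = ∑ x ∈ F, ∑ y, α * f x y := by
        simp_rw [Finset.mul_sum, ← Finset.mul_sum, hf.2.1]
    _ ≤ ∑ x ∈ F, ∑ y, f x y * nHam x y :=
        Finset.sum_le_sum fun x hx => Finset.sum_le_sum fun y _ => hterm x hx y
    _ ≤ ∑ x, ∑ y, f x y * nHam x y :=
        Finset.sum_le_sum_of_subset_of_nonneg (Finset.subset_univ F) fun x _ _ =>
          Finset.sum_nonneg fun y _ => mul_nonneg (hf.1 x y) (nHam_nonneg x y)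

end IsFlow

lemma mul_sum_le_emd {D₁ D₂ : (Fin n → Bool) → ℝ} (h₁ : IsDist D₁) (h₂ : IsDist D₂) {α : ℝ}
    {F : Finset (Fin n → Bool)} (hfar : ∀ x ∈ F, ∀ y, D₂ y ≠ 0 → α ≤ nHam x y) :
    α * ∑ x ∈ F, D₁ x ≤ emd D₁ D₂ := by
  refine le_csInf ⟨_, _, isFlow_mul h₁ h₂, rfl⟩ ?_
  rintro c ⟨f, hf, rfl⟩
  exact hf.mul_sum_le_cost hfar

open scoped Classical in
theorem stmt_6_general {n : ℕ} (α β : ℝ) (s : ℕ) (hα : 0 < α)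
    (D D₀ : (Fin n → Bool) → ℝ) (hD : IsDist D) (hD₀ : IsDist D₀)
    (C : Fin s → Finset (Fin n → Bool))
    (hsupp : ∀ x, D₀ x ≠ 0 → ∃ i, x ∈ C i)
    (hemd : emd D D₀ ≤ β) :
    ∑ x ∈ Finset.univ.filter (fun x => ∀ i, ∀ y ∈ C i, α < nHam x y), D x ≤ β / α := by
  have hfar : ∀ x ∈ Finset.univ.filter (fun x => ∀ i, ∀ y ∈ C i, α < nHam x y),
      ∀ y, D₀ y ≠ 0 → α ≤ nHam x y := by
    intro x hx y hy
    obtain ⟨i, hi⟩ := hsupp y hy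
    exact ((Finset.mem_filter.mp hx).2 i y hi).le
  rw [le_div_iff₀' hα]
  exact (mul_sum_le_emd hD hD₀ hfar).trans hemd

open scoped Classical in
/-- Let `D` be β-close in EMD to an `(α,r)`-clusterable distribution `D₀`
whose clustering is realized by clusters `C₁,…,C_s` of its support. Then the `D`-mass of
the set of vectors at normalized Hamming distance greater than `α` from every vector of
`⋃ C i` is at most `β / α`. -/
theorem stmt_6 {n : ℕ} (α β : ℝ) (r s : ℕ) (hα : 0 < α) (hα1 : α < 1)
    (D D₀ : (Fin n → Bool) → ℝ) (hD : IsDist D) (hD₀ : IsDist D₀)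
    (C : Fin s → Finset (Fin n → Bool))
    (hs : s ≤ r)
    (hdisj : ∀ i j, i ≠ j → Disjoint (C i) (C j))
    (hsupp : ∀ x, D₀ x ≠ 0 → ∃ i, x ∈ C i)
    (hdiam : ∀ i, ∀ x ∈ C i, ∀ y ∈ C i, nHam x y ≤ α)
    (hemd : emd D D₀ ≤ β) :
    ∑ x ∈ Finset.univ.filter (fun x => ∀ i, ∀ y ∈ C i, α < nHam x y), D x ≤ β / α :=
  stmt_6_general α β s hα D D₀ hD hD₀ C hsupp hemd
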